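/- Every irreducible monomial ideal is 0-clean. That is, if I ⊆ S is a monomial ideal generated by pure powers of variables, I = (x_{i_1}^{a_1},…,x_{i_m}^{a_m}) with all a_j ≥ 1 and i_1,…,i_m distinct, then I is 0-clean. -/

import Mathlib

open MvPolynomial

/-- A monomial ideal: an ideal generated by monomials. -/
def IsMonomialIdeal {K : Type*} [Field K] {σ : Type*}
    (I : Ideal (MvPolynomial σ K)) : Prop :=
  ∃ G : Set (σ →₀ ℕ), I = Ideal.span ((fun a : σ →₀ ℕ => (monomial a (1 : K))) '' G)

/-- `u = x^a` is a cleaner monomial of `I`: `u` is a non-unit monomial not in `I`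
with `min(I + Su) ⊆ min(I)`. -/
def IsCleaner {K : Type*} [Field K] {σ : Type*}
    (I : Ideal (MvPolynomial σ K)) (a : σ →₀ ℕ) : Prop :=
  a ≠ 0 ∧ (monomial a (1 : K)) ∉ I ∧
    (I + Ideal.span {(monomial a (1 : K))}).minimalPrimes ⊆ I.minimalPrimes

/-- `I` has no embedded prime ideals: every associated prime of `S/I` is a minimal prime of `I`. -/
def NoEmbeddedPrimes {K : Type*} [Field K] {σ : Type*}
    (I : Ideal (MvPolynomial σ K)) : Prop :=
  ∀ P ∈ associatedPrimes (MvPolynomial σ K) (MvPolynomial σ K ⧸ I), P ∈ I.minimalPrimes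

/-- `I` is `k`-clean: `I` is prime, or `I` has no embedded primes and there is a cleaner
monomial `u ∉ I` with `|supp u| ≤ k+1` such that `I : u` and `I + Su` are `k`-clean. -/
inductive KClean (K : Type*) [Field K] (σ : Type*) (k : ℕ) :
    Ideal (MvPolynomial σ K) → Prop
  | prime (I : Ideal (MvPolynomial σ K)) (h : I.IsPrime) : KClean K σ k I
  | step (I : Ideal (MvPolynomial σ K)) (a : σ →₀ ℕ)
      (hne : NoEmbeddedPrimes I) (hcl : IsCleaner I a)
      (hsupp : a.support.card ≤ k + 1)
      (hcolon : KClean K σ k (Submodule.colon I (Ideal.span {(monomial a (1 : K))})))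
      (hsum : KClean K σ k (I + Ideal.span {(monomial a (1 : K))})) : KClean K σ k I

/-- A submodule of `S/I` is multigraded iff it is generated by images of monomials. -/
def IsMultigradedSubmodule {K : Type*} [Field K] {σ : Type*}
    (I : Ideal (MvPolynomial σ K)) (N : Submodule (MvPolynomial σ K) (MvPolynomial σ K ⧸ I)) :
    Prop :=
  ∃ A : Set (σ →₀ ℕ),
    N = Submodule.span (MvPolynomial σ K)
      ((fun a : σ →₀ ℕ => Ideal.Quotient.mk I (monomial a (1 : K))) '' A)

/-- `I` is clean: `S/I` admits a multigraded prime filtration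
`0 = M₀ ⊂ M₁ ⊂ ⋯ ⊂ M_r = S/I` whose factors `M_i/M_{i-1}` are isomorphic to `S/P_i`
(with a multidegree shift) for minimal primes `P_i` of `I`. -/
def IsClean {K : Type*} [Field K] {σ : Type*} (I : Ideal (MvPolynomial σ K)) : Prop :=
  ∃ (r : ℕ) (M : Fin (r + 1) → Submodule (MvPolynomial σ K) (MvPolynomial σ K ⧸ I)),
    M 0 = ⊥ ∧ M (Fin.last r) = ⊤ ∧ StrictMono M ∧
    (∀ i, IsMultigradedSubmodule I (M i)) ∧
    (∀ i : Fin r, ∃ P ∈ I.minimalPrimes,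
      Nonempty ((↥(M i.succ) ⧸ (Submodule.comap (M i.succ).subtype (M i.castSucc)))
        ≃ₗ[MvPolynomial σ K] (MvPolynomial σ K ⧸ P)))


/-!
Let `P = (x_i : i ∈ T)`, where `T` is the set of variables occurring in
`I = (x_{ι j}^{a j})`. Multiplying by a polynomial in the variables outside `T` commutes with
discarding the terms of a polynomial that lie in `I`, so a nonzero such polynomial is a
nonzerodivisor modulo `I`. Any `y ∉ P` is congruent modulo `P ⊆ √I` to a nonzero `y₀` in those
variables, and then `y₀ ^ N ∈ I + (y)` for some `N`. Hence `I` is `P`-primary, and `P` is its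
only associated prime. If some `a j₀ ≥ 2`, the monomial `u = x_{ι j₀}^{a j₀ - 1}` is a cleaner
monomial, and `I : u` and `I + (u)` are pure-power ideals with smaller exponents, so induction on
the exponents ends at the prime ideal `P`.
-/

open Function

namespace MvPolynomial

section Filter

variable {R σ : Type*} [CommSemiring R] {p : (σ →₀ ℕ) → Prop} [DecidablePred p]

variable (p) in
noncomputable def filter (f : MvPolynomial σ R) : MvPolynomial σ R :=
  ∑ d ∈ f.support with p d, monomial d (coeff d f)

theorem coeff_filter (d : σ →₀ ℕ) (f : MvPolynomial σ R) :
    coeff d (filter p f) = if p d then coeff d f else 0 := by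
  classical
  simp only [filter, coeff_sum, coeff_monomial, Finset.sum_ite_eq', Finset.mem_filter,
    mem_support_iff]
  by_cases hd : coeff d f = 0 <;> simp [hd]

theorem filter_eq_zero_iff {f : MvPolynomial σ R} :
    filter p f = 0 ↔ ∀ d, p d → coeff d f = 0 := by
  simp only [MvPolynomial.ext_iff, coeff_filter, coeff_zero, ite_eq_right_iff]

theorem filter_add (f g : MvPolynomial σ R) : filter p (f + g) = filter p f + filter p g := by
  ext d
  simp only [coeff_filter, coeff_add]
  split_ifs <;> simp

theorem filter_mul_C (f : MvPolynomial σ R) (r : R) : filter p (f * C r) = filter p f * C r := by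
  ext d
  simp only [mul_comm _ (C r), coeff_filter, coeff_C_mul]
  split_ifs <;> simp

theorem filter_mul_X {i : σ} (hp : ∀ d, p (d + Finsupp.single i 1) ↔ p d)
    (f : MvPolynomial σ R) : filter p (f * X i) = filter p f * X i := by
  classical
  ext d
  simp only [coeff_filter, coeff_mul_X']
  by_cases hi : i ∈ d.support
  · have hle : Finsupp.single i 1 ≤ d :=
      Finsupp.single_le_iff.2 (Nat.one_le_iff_ne_zero.2 (Finsupp.mem_support_iff.1 hi))
    have hd : p (d - Finsupp.single i 1) ↔ p d := by
      conv_rhs => rw [← tsub_add_cancel_of_le hle]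
      exact (hp _).symm
    simp [hi, hd]
  · simp [hi]

theorem filter_mul_of_mem_supported {S : Set σ}
    (hp : ∀ d, ∀ i ∈ S, p (d + Finsupp.single i 1) ↔ p d) {g : MvPolynomial σ R}
    (hg : g ∈ supported R S) (f : MvPolynomial σ R) : filter p (f * g) = filter p f * g := by
  rw [supported_eq_adjoin_X] at hg
  induction hg using Algebra.adjoin_induction generalizing f with
  | mem _ hx =>
    obtain ⟨i, hi, rfl⟩ := hx
    exact filter_mul_X (fun d => hp d i hi) f
  | algebraMap r => exact filter_mul_C f r
  | add g₁ g₂ _ _ h₁ h₂ => rw [mul_add, filter_add, h₁, h₂, mul_add]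
  | mul g₁ g₂ _ _ h₁ h₂ => rw [← mul_assoc, h₂, h₁, mul_assoc]

end Filter

theorem exists_mem_supported_compl_sub_mem_span_X_image {R σ : Type*} [CommRing R] (T : Set σ)
    (y : MvPolynomial σ R) :
    ∃ y₀ ∈ supported R Tᶜ, y - y₀ ∈ Ideal.span (X '' T : Set (MvPolynomial σ R)) := by
  classical
  refine ⟨filter (fun d => ∀ i ∈ T, d i = 0) y, ?_, ?_⟩
  · rw [mem_supported]
    intro i hi hiT
    obtain ⟨d, hd, hid⟩ := (mem_vars_iff_mem_support i).1 hi
    rw [mem_support_iff, coeff_filter] at hd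
    split_ifs at hd with hT
    · exact Finsupp.mem_support_iff.1 hid (hT i hiT)
    · exact hd rfl
  · rw [mem_ideal_span_X_image]
    intro d hd
    rw [mem_support_iff, coeff_sub, coeff_filter] at hd
    split_ifs at hd with hT
    · simp at hd
    · push Not at hT
      exact hT

end MvPolynomial

section PurePowerIdeal

variable {K σ J : Type*} [Field K] {ι : J → σ} {a : J → ℕ}

variable (K) in
noncomputable def purePowerIdeal (ι : J → σ) (a : J → ℕ) : Ideal (MvPolynomial σ K) :=
  Ideal.span (Set.range fun j => X (ι j) ^ a j)

theorem mem_purePowerIdeal {f : MvPolynomial σ K} :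
    f ∈ purePowerIdeal K ι a ↔ ∀ d ∈ f.support, ∃ j, a j ≤ d (ι j) := by
  have hgen : (Set.range fun j => (X (ι j) : MvPolynomial σ K) ^ a j)
      = (fun s => monomial s (1 : K)) '' Set.range fun j => Finsupp.single (ι j) (a j) := by
    rw [← Set.range_comp]
    simp [Function.comp_def, X_pow_eq_monomial]
  rw [purePowerIdeal, hgen, mem_ideal_span_monomial_image]
  simp [Finsupp.single_le_iff]

theorem purePowerIdeal_one : purePowerIdeal K ι 1 = Ideal.span (X '' Set.range ι) := by
  simp [purePowerIdeal, ← Set.range_comp, Function.comp_def]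

theorem mem_of_mul_mem_of_mem_supported {x g : MvPolynomial σ K}
    (hg : g ∈ supported K (Set.range ι)ᶜ) (hg0 : g ≠ 0) (hxg : x * g ∈ purePowerIdeal K ι a) :
    x ∈ purePowerIdeal K ι a := by
  classical
  have hmem : ∀ f : MvPolynomial σ K,
      f ∈ purePowerIdeal K ι a ↔ filter (fun d => ∀ j, d (ι j) < a j) f = 0 := by
    intro f
    rw [mem_purePowerIdeal, filter_eq_zero_iff]
    refine forall_congr' fun d => ?_
    rw [mem_support_iff, ← not_imp_not]
    push Not
    rfl
  have hp : ∀ d : σ →₀ ℕ, ∀ i ∈ (Set.range ι)ᶜ,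
      (∀ j, (d + Finsupp.single i 1 : σ →₀ ℕ) (ι j) < a j) ↔ ∀ j, d (ι j) < a j := by
    intro d i hi
    have : ∀ j, ι j ≠ i := fun j h => hi ⟨j, h⟩
    simp [this]
  rw [hmem] at hxg ⊢
  rw [filter_mul_of_mem_supported hp hg] at hxg
  exact (mul_eq_zero.1 hxg).resolve_right hg0

theorem span_X_image_range_le_radical_purePowerIdeal :
    Ideal.span (X '' Set.range ι) ≤ (purePowerIdeal K ι a).radical := by
  rw [Ideal.span_le]
  rintro _ ⟨_, ⟨j, rfl⟩, rfl⟩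
  exact ⟨a j, Ideal.subset_span ⟨j, rfl⟩⟩

theorem purePowerIdeal_le_span_X_image_range (ha : ∀ j, 1 ≤ a j) :
    purePowerIdeal K ι a ≤ Ideal.span (X '' Set.range ι) := by
  rw [purePowerIdeal, Ideal.span_le]
  rintro _ ⟨j, rfl⟩
  exact Ideal.pow_mem_of_mem _ (Ideal.subset_span (Set.mem_image_of_mem X (Set.mem_range_self j)))
    _ (ha j)

theorem mem_purePowerIdeal_of_mul_mem {x y : MvPolynomial σ K}
    (hxy : x * y ∈ purePowerIdeal K ι a) (hy : y ∉ Ideal.span (X '' Set.range ι)) :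
    x ∈ purePowerIdeal K ι a := by
  obtain ⟨y₀, hy₀, hyy₀⟩ := exists_mem_supported_compl_sub_mem_span_X_image (Set.range ι) y
  have hy₀0 : y₀ ≠ 0 := by
    rintro rfl
    exact hy (by simpa using hyy₀)
  obtain ⟨N, hN⟩ : y₀ - y ∈ (purePowerIdeal K ι a).radical :=
    span_X_image_range_le_radical_purePowerIdeal (by simpa using neg_mem hyy₀)
  refine mem_of_mul_mem_of_mem_supported (pow_mem hy₀ N) (pow_ne_zero N hy₀0) ?_
  obtain ⟨q, hq⟩ := sub_dvd_pow_sub_pow y₀ (y₀ - y) N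
  rw [sub_sub_cancel] at hq
  have hsplit : x * y₀ ^ N = x * (y₀ - y) ^ N + x * y * q := by
    rw [mul_assoc, ← hq]
    ring
  rw [hsplit]
  exact add_mem (Ideal.mul_mem_left _ _ hN) (Ideal.mul_mem_right _ _ hxy)

theorem isPrime_span_X_image (T : Set σ) :
    (Ideal.span (X '' T) : Ideal (MvPolynomial σ K)).IsPrime := by
  have hT : purePowerIdeal K ((↑) : T → σ) 1 = Ideal.span (X '' T) := by
    rw [purePowerIdeal_one, Subtype.range_coe]
  refine ⟨?_, fun {x y} hxy => or_iff_not_imp_right.2 fun hy => ?_⟩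
  · rw [Ne, Ideal.eq_top_iff_one, mem_ideal_span_X_image]
    simp
  · rw [← hT] at hxy ⊢
    exact mem_purePowerIdeal_of_mul_mem hxy (by rwa [Subtype.range_coe])

theorem isPrimary_purePowerIdeal (ha : ∀ j, 1 ≤ a j) : (purePowerIdeal K ι a).IsPrimary := by
  refine Ideal.isPrimary_iff.2 ⟨?_, fun hxy => or_iff_not_imp_right.2 fun hy => ?_⟩
  · exact ne_top_of_le_ne_top (isPrime_span_X_image _).ne_top
      (purePowerIdeal_le_span_X_image_range ha)
  · exact mem_purePowerIdeal_of_mul_mem hxy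
      fun h => hy (span_X_image_range_le_radical_purePowerIdeal h)

theorem radical_purePowerIdeal (ha : ∀ j, 1 ≤ a j) :
    (purePowerIdeal K ι a).radical = Ideal.span (X '' Set.range ι) :=
  le_antisymm
    ((isPrime_span_X_image _).radical_le_iff.2 (purePowerIdeal_le_span_X_image_range ha))
    span_X_image_range_le_radical_purePowerIdeal

theorem minimalPrimes_purePowerIdeal (ha : ∀ j, 1 ≤ a j) :
    (purePowerIdeal K ι a).minimalPrimes = {Ideal.span (X '' Set.range ι)} := by
  rw [Ideal.minimalPrimes_eq_subsingleton (isPrimary_purePowerIdeal ha), radical_purePowerIdeal ha]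

theorem colon_purePowerIdeal_span_X_pow [DecidableEq J] (hι : Injective ι) (j₀ : J) (k : ℕ) :
    Submodule.colon (purePowerIdeal K ι a) (Ideal.span {(X (ι j₀) ^ k : MvPolynomial σ K)}) =
      purePowerIdeal K ι (update a j₀ (a j₀ - k)) := by
  ext f
  have hsupp : (f * X (ι j₀) ^ k).support
      = f.support.map (addRightEmbedding (Finsupp.single (ι j₀) k)) := by
    rw [X_pow_eq_monomial]
    exact AddMonoidAlgebra.support_coeff_mul_single f _ (by simp) _
  rw [Ideal.mem_colon_span_singleton, mem_purePowerIdeal, mem_purePowerIdeal, hsupp,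
    Finset.forall_mem_map]
  refine forall₂_congr fun d _ => exists_congr fun j => ?_
  rcases eq_or_ne j j₀ with rfl | hj
  · simp only [addRightEmbedding_apply, Finsupp.add_apply, Finsupp.single_eq_same,
      update_self]
    omega
  · simp [hj, hι.ne hj]

theorem purePowerIdeal_add_span_X_pow [DecidableEq J] {j₀ : J} {k : ℕ} (hk : k ≤ a j₀) :
    purePowerIdeal K ι a + Ideal.span {X (ι j₀) ^ k} = purePowerIdeal K ι (update a j₀ k) := by
  rw [Submodule.add_eq_sup]
  apply le_antisymm
  · refine sup_le (Ideal.span_le.2 ?_) (Ideal.span_le.2 ?_)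
    · rintro _ ⟨j, rfl⟩
      rcases eq_or_ne j j₀ with rfl | hj
      · exact Ideal.mem_of_dvd _ (pow_dvd_pow _ hk) (Ideal.subset_span ⟨j, by simp⟩)
      · exact Ideal.subset_span ⟨j, by simp [hj]⟩
    · rw [Set.singleton_subset_iff]
      exact Ideal.subset_span ⟨j₀, by simp⟩
  · rw [purePowerIdeal, Ideal.span_le]
    rintro _ ⟨j, rfl⟩
    rcases eq_or_ne j j₀ with rfl | hj
    · exact Ideal.mem_sup_right (Ideal.subset_span (by simp))
    · exact Ideal.mem_sup_left (Ideal.subset_span ⟨j, by simp [hj]⟩)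

theorem X_pow_notMem_purePowerIdeal (hι : Injective ι) (ha : ∀ j, 1 ≤ a j) {j₀ : J} {k : ℕ}
    (hk : k < a j₀) : X (ι j₀) ^ k ∉ purePowerIdeal K ι a := by
  rw [mem_purePowerIdeal, support_X_pow]
  intro h
  obtain ⟨j, hj⟩ := h _ (Finset.mem_singleton_self _)
  rcases eq_or_ne j j₀ with rfl | hj₀
  · rw [Finsupp.single_eq_same] at hj
    omega
  · rw [Finsupp.single_eq_of_ne (hι.ne hj₀)] at hj
    have := ha j
    omega

theorem isCleaner_purePowerIdeal [DecidableEq J] (hι : Injective ι) (ha : ∀ j, 1 ≤ a j)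
    {j₀ : J} {k : ℕ} (hk0 : k ≠ 0) (hk : k < a j₀) :
    IsCleaner (purePowerIdeal K ι a) (Finsupp.single (ι j₀) k) := by
  have ha' : ∀ j, 1 ≤ update a j₀ k j :=
    (forall_update_iff a fun _ v => 1 ≤ v).2 ⟨Nat.one_le_iff_ne_zero.2 hk0, fun j _ => ha j⟩
  rw [IsCleaner, ← X_pow_eq_monomial, purePowerIdeal_add_span_X_pow hk.le,
    minimalPrimes_purePowerIdeal ha', minimalPrimes_purePowerIdeal ha]
  exact ⟨Finsupp.single_ne_zero.2 hk0, X_pow_notMem_purePowerIdeal hι ha hk, le_rfl⟩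

end PurePowerIdeal

theorem noEmbeddedPrimes_of_isPrimary {K σ : Type*} [Field K] [Finite σ]
    {I : Ideal (MvPolynomial σ K)} (hI : I.IsPrimary) : NoEmbeddedPrimes I := by
  intro P hP
  rw [associatedPrimes.eq_singleton_of_isPrimary hI] at hP
  rwa [Ideal.minimalPrimes_eq_subsingleton hI]

theorem kClean_purePowerIdeal {K σ J : Type*} [Field K] [Finite σ] [Finite J] {ι : J → σ}
    (hι : Injective ι) (a : J → ℕ) (ha : ∀ j, 1 ≤ a j) :
    KClean K σ 0 (purePowerIdeal K ι a) := by
  classical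
  induction a using WellFoundedLT.induction with
  | _ a ih =>
    by_cases h1 : a = 1
    · subst h1
      rw [purePowerIdeal_one]
      exact .prime _ (isPrime_span_X_image _)
    obtain ⟨j₀, hj₀⟩ : ∃ j₀, 2 ≤ a j₀ := by
      by_contra! h
      exact h1 (funext fun j => le_antisymm (Nat.le_of_lt_succ (h j)) (ha j))
    have hupdate : ∀ v, 1 ≤ v → ∀ j, 1 ≤ update a j₀ v j := fun v hv =>
      (forall_update_iff a fun _ v => 1 ≤ v).2 ⟨hv, fun j _ => ha j⟩
    refine .step _ (Finsupp.single (ι j₀) (a j₀ - 1))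
      (noEmbeddedPrimes_of_isPrimary (isPrimary_purePowerIdeal ha))
      (isCleaner_purePowerIdeal hι ha (by omega) (by omega))
      ((Finset.card_le_card Finsupp.support_single_subset).trans (Finset.card_singleton _).le)
      ?_ ?_ <;> rw [← X_pow_eq_monomial]
    · rw [colon_purePowerIdeal_span_X_pow hι]
      exact ih _ (update_lt_self_iff.2 (by omega)) (hupdate _ (by omega))
    · rw [purePowerIdeal_add_span_X_pow (by omega)]
      exact ih _ (update_lt_self_iff.2 (by omega)) (hupdate _ (by omega))

/-- Every irreducible monomial ideal, i.e. an ideal generated by pure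
powers of distinct variables `I = (x_{i₁}^{a₁}, …, x_{iₘ}^{aₘ})` with all `aⱼ ≥ 1`,
is `0`-clean. -/
theorem irreducible_monomial_zeroClean {K : Type*} [Field K] {n : ℕ}
    (m : ℕ) (ι : Fin m → Fin n) (hι : Function.Injective ι)
    (a : Fin m → ℕ) (ha : ∀ j, 1 ≤ a j)
    (I : Ideal (MvPolynomial (Fin n) K))
    (hI : I = Ideal.span (Set.range fun j : Fin m => (X (ι j) : MvPolynomial (Fin n) K) ^ a j)) :
    KClean K (Fin n) 0 I := by
  subst hI
  exact kClean_purePowerIdeal hι a ha
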